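/- For any finite subset X of ℝ^n with the Euclidean metric, the similarity matrix ζ with entries ζ_{ij} = exp(-‖x_i - x_j‖) is symmetric positive definite, hence invertible. -/

import Mathlib

open Finset MeasureTheory Set Filter

section Aux

variable {ι : Type*} [Fintype ι]

/-- Quadratic forms of entrywise powers of a Gram matrix are nonnegative. -/
lemma gram_pow_quad_nonneg {ι κ : Type*} [Fintype ι] [Fintype κ]
    (v : ι → κ → ℝ) (c : ι → ℝ) (k : ℕ) :
    0 ≤ ∑ i, ∑ j, c i * c j * (∑ t, v i t * v j t) ^ k := by
  have expand : ∀ i j : ι, (∑ t, v i t * v j t) ^ k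
      = ∑ α : Fin k → κ, (∏ l, v i (α l)) * (∏ l, v j (α l)) := by
    intro i j
    calc (∑ t, v i t * v j t) ^ k
        = ∏ _l : Fin k, (∑ t, v i t * v j t) := by
          rw [Finset.prod_const, Finset.card_univ, Fintype.card_fin]
      _ = ∑ α ∈ Fintype.piFinset (fun _ : Fin k => (Finset.univ : Finset κ)),
            ∏ l, v i (α l) * v j (α l) := Finset.prod_univ_sum _ _
      _ = ∑ α : Fin k → κ, (∏ l, v i (α l)) * (∏ l, v j (α l)) := by
          rw [Fintype.piFinset_univ]
          exact Finset.sum_congr rfl fun α _ => Finset.prod_mul_distrib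
  simp_rw [expand, Finset.mul_sum]
  have key : ∑ i, ∑ j, ∑ α : Fin k → κ,
        c i * c j * ((∏ l, v i (α l)) * (∏ l, v j (α l)))
      = ∑ α : Fin k → κ, (∑ i, c i * ∏ l, v i (α l)) ^ 2 := by
    calc ∑ i, ∑ j, ∑ α : Fin k → κ,
          c i * c j * ((∏ l, v i (α l)) * (∏ l, v j (α l)))
        = ∑ i, ∑ α : Fin k → κ, ∑ j,
            c i * c j * ((∏ l, v i (α l)) * (∏ l, v j (α l))) :=
          Finset.sum_congr rfl fun i _ => Finset.sum_comm
      _ = ∑ α : Fin k → κ, ∑ i, ∑ j,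
            c i * c j * ((∏ l, v i (α l)) * (∏ l, v j (α l))) := Finset.sum_comm
      _ = ∑ α : Fin k → κ, (∑ i, c i * ∏ l, v i (α l)) ^ 2 := by
          refine Finset.sum_congr rfl fun α _ => ?_
          rw [sq, Finset.sum_mul_sum]
          exact Finset.sum_congr rfl fun i _ => Finset.sum_congr rfl fun j _ => by ring
  rw [key]
  exact Finset.sum_nonneg fun α _ => sq_nonneg _

lemma gram_exp_tsum (A : ι → ι → ℝ) (c : ι → ℝ) :
    ∑ i, ∑ j, c i * c j * Real.exp (A i j)
      = ∑' k : ℕ, ∑ i, ∑ j, c i * c j * (A i j ^ k / k.factorial) := by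
  have hsum : ∀ i j : ι, Summable (fun k : ℕ => c i * c j * (A i j ^ k / k.factorial)) :=
    fun i j => (Real.summable_pow_div_factorial (A i j)).mul_left _
  have hexp : ∀ i j : ι, c i * c j * Real.exp (A i j)
      = ∑' k : ℕ, c i * c j * (A i j ^ k / k.factorial) := by
    intro i j
    rw [tsum_mul_left]
    congr 1
    rw [Real.exp_eq_exp_ℝ, NormedSpace.exp_eq_tsum_div]
  simp_rw [hexp]
  calc ∑ i, ∑ j, ∑' k : ℕ, c i * c j * (A i j ^ k / k.factorial)
      = ∑ i, ∑' k : ℕ, ∑ j, c i * c j * (A i j ^ k / k.factorial) :=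
        Finset.sum_congr rfl fun i _ => (Summable.tsum_finsetSum fun j _ => hsum i j).symm
    _ = ∑' k : ℕ, ∑ i, ∑ j, c i * c j * (A i j ^ k / k.factorial) :=
        (Summable.tsum_finsetSum fun i _ => summable_sum fun j _ => hsum i j).symm

lemma term_nonneg {κ : Type*} [Fintype κ] (v : ι → κ → ℝ) (c : ι → ℝ) (k : ℕ) :
    0 ≤ ∑ i, ∑ j, c i * c j * ((∑ t, v i t * v j t) ^ k / k.factorial) := by
  have h := gram_pow_quad_nonneg v c k
  have : ∑ i, ∑ j, c i * c j * ((∑ t, v i t * v j t) ^ k / k.factorial)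
      = (∑ i, ∑ j, c i * c j * (∑ t, v i t * v j t) ^ k) / k.factorial := by
    rw [Finset.sum_div]
    exact Finset.sum_congr rfl fun i _ => by rw [Finset.sum_div]; exact Finset.sum_congr rfl fun j _ => by ring
  rw [this]
  positivity

lemma gram_exp_nonneg {κ : Type*} [Fintype κ] (v : ι → κ → ℝ) (c : ι → ℝ) :
    0 ≤ ∑ i, ∑ j, c i * c j * Real.exp (∑ t, v i t * v j t) := by
  rw [gram_exp_tsum (fun i j => ∑ t, v i t * v j t) c]
  exact tsum_nonneg fun k => term_nonneg v c k

lemma gram_exp_bound {κ : Type*} [Fintype κ] (v : ι → κ → ℝ) (c : ι → ℝ) :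
    (∑ i, c i) ^ 2 + ∑ i, ∑ j, c i * c j * (∑ t, v i t * v j t)
      ≤ ∑ i, ∑ j, c i * c j * Real.exp (∑ t, v i t * v j t) := by
  rw [gram_exp_tsum (fun i j => ∑ t, v i t * v j t) c]
  have hsummable : Summable (fun k : ℕ => ∑ i, ∑ j, c i * c j * ((∑ t, v i t * v j t) ^ k / k.factorial)) :=
    summable_sum fun i _ => summable_sum fun j _ =>
      (Real.summable_pow_div_factorial _).mul_left _
  have h01 : ∑ k ∈ ({0, 1} : Finset ℕ), ∑ i, ∑ j, c i * c j * ((∑ t, v i t * v j t) ^ k / k.factorial)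
      ≤ ∑' k : ℕ, ∑ i, ∑ j, c i * c j * ((∑ t, v i t * v j t) ^ k / k.factorial) :=
    Summable.sum_le_tsum _ (fun k _ => term_nonneg v c k) hsummable
  refine le_trans (le_of_eq ?_) h01
  rw [Finset.sum_insert (by norm_num), Finset.sum_singleton]
  have h0 : ∑ i, ∑ j, c i * c j * ((∑ t, v i t * v j t) ^ 0 / (0:ℕ).factorial) = (∑ i, c i) ^ 2 := by
    simp [sq, Finset.sum_mul_sum]
  have h1 : ∑ i, ∑ j, c i * c j * ((∑ t, v i t * v j t) ^ 1 / (1:ℕ).factorial)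
      = ∑ i, ∑ j, c i * c j * (∑ t, v i t * v j t) := by
    simp
  rw [h0, h1]

lemma gaussian_quad_nonneg {n : ℕ} (y : ι → EuclideanSpace ℝ (Fin n)) (c : ι → ℝ)
    (s : ℝ) (hs : 0 ≤ s) :
    0 ≤ ∑ i, ∑ j, c i * c j * Real.exp (-(dist (y i) (y j) ^ 2 * s)) := by
  set w : ι → Fin n → ℝ := fun i t => Real.sqrt (2 * s) * y i t with hw
  have hinner : ∀ i j, (inner ℝ (y i) (y j) : ℝ) = ∑ t, y i t * y j t := by
    intro i j
    simp [PiLp.inner_apply, RCLike.inner_apply, conj_trivial]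
    exact Finset.sum_congr rfl fun t _ => mul_comm _ _
  have hG : ∀ i j, ∑ t, w i t * w j t = 2 * s * ∑ t, y i t * y j t := by
    intro i j
    rw [Finset.mul_sum]
    refine Finset.sum_congr rfl fun t _ => ?_
    simp only [hw]
    rw [mul_mul_mul_comm, Real.mul_self_sqrt (by positivity)]
  have key : ∀ i j, c i * c j * Real.exp (-(dist (y i) (y j) ^ 2 * s))
      = (c i * Real.exp (-(‖y i‖ ^ 2 * s))) * (c j * Real.exp (-(‖y j‖ ^ 2 * s)))
        * Real.exp (∑ t, w i t * w j t) := by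
    intro i j
    have hd : dist (y i) (y j) ^ 2
        = ‖y i‖ ^ 2 - 2 * (∑ t, y i t * y j t) + ‖y j‖ ^ 2 := by
      rw [dist_eq_norm, norm_sub_sq_real, hinner]
    have hexpo : -(dist (y i) (y j) ^ 2 * s)
        = -(‖y i‖ ^ 2 * s) + -(‖y j‖ ^ 2 * s) + ∑ t, w i t * w j t := by
      rw [hd, hG]; ring
    rw [hexpo, Real.exp_add, Real.exp_add]; ring
  simp_rw [key]
  exact gram_exp_nonneg w _

/-- The kernel for the integral representation of the distance. -/
noncomputable def kf (b : ℝ) (t : ℝ) : ℝ := (1 - Real.exp (-(b * t))) * t ^ (-(3/2) : ℝ)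

lemma kf_nonneg {b t : ℝ} (hb : 0 ≤ b) (ht : 0 < t) : 0 ≤ kf b t :=
  mul_nonneg (by simp [Real.exp_le_one_iff]; positivity) (Real.rpow_nonneg ht.le _)

lemma kf_measurable (b : ℝ) : Measurable (kf b) := by
  unfold kf
  have h1 : Measurable fun t : ℝ => 1 - Real.exp (-(b * t)) := by
    have : Measurable fun t : ℝ => b * t := measurable_const.mul measurable_id
    exact measurable_const.sub (this.neg.exp)
  have h2 : Measurable fun t : ℝ => t ^ (-(3/2) : ℝ) := by measurability
  exact h1.mul h2

lemma kf_integrableOn {b : ℝ} (hb : 0 ≤ b) : IntegrableOn (kf b) (Ioi (0:ℝ)) := by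
  have h1 : IntegrableOn (kf b) (Ioc (0:ℝ) 1) := by
    have hint : IntegrableOn (fun t : ℝ => b * t ^ (-(1/2) : ℝ)) (Ioc (0:ℝ) 1) := by
      refine Integrable.const_mul ?_ b
      have base : IntegrableOn (fun t : ℝ => t ^ (-(1/2) : ℝ)) (Ioo (0:ℝ) 2) :=
        (intervalIntegral.integrableOn_Ioo_rpow_iff (show (0:ℝ) < 2 by norm_num)).2 (by norm_num)
      exact base.mono_set (fun x hx => ⟨hx.1, lt_of_le_of_lt hx.2 one_lt_two⟩)
    refine Integrable.mono hint ((kf_measurable b).aestronglyMeasurable.restrict) ?_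
    refine (ae_restrict_iff' measurableSet_Ioc).2 (ae_of_all _ fun t ht => ?_)
    have ht0 : 0 < t := ht.1
    have h1e : 1 - Real.exp (-(b * t)) ≤ b * t := by
      have := Real.add_one_le_exp (-(b * t))
      linarith
    have hrw : t * t ^ (-(3/2) : ℝ) = t ^ (-(1/2) : ℝ) := by
      nth_rewrite 1 [← Real.rpow_one t]
      rw [← Real.rpow_add ht0]; norm_num
    rw [Real.norm_eq_abs, Real.norm_eq_abs, abs_of_nonneg (kf_nonneg hb ht0),
      abs_of_nonneg (by positivity)]
    calc kf b t ≤ (b * t) * t ^ (-(3/2) : ℝ) :=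
          mul_le_mul_of_nonneg_right h1e (Real.rpow_nonneg ht0.le _)
      _ = b * t ^ (-(1/2) : ℝ) := by rw [mul_assoc, hrw]
  have h2 : IntegrableOn (kf b) (Ioi (1:ℝ)) := by
    have hint : IntegrableOn (fun t : ℝ => t ^ (-(3/2) : ℝ)) (Ioi (1:ℝ)) :=
      integrableOn_Ioi_rpow_of_lt (by norm_num) one_pos
    refine Integrable.mono hint ((kf_measurable b).aestronglyMeasurable.restrict) ?_
    refine (ae_restrict_iff' measurableSet_Ioi).2 (ae_of_all _ fun t ht => ?_)
    have ht0 : (0:ℝ) < t := lt_trans one_pos ht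
    rw [Real.norm_eq_abs, Real.norm_eq_abs, abs_of_nonneg (kf_nonneg hb ht0),
      abs_of_nonneg (Real.rpow_nonneg ht0.le _)]
    have : 1 - Real.exp (-(b * t)) ≤ 1 := by
      have : 0 < Real.exp (-(b * t)) := Real.exp_pos _
      linarith
    calc kf b t ≤ 1 * t ^ (-(3/2) : ℝ) :=
          mul_le_mul_of_nonneg_right this (Real.rpow_nonneg ht0.le _)
      _ = t ^ (-(3/2) : ℝ) := one_mul _
  have := h1.union h2
  rwa [Ioc_union_Ioi_eq_Ioi zero_le_one] at this

/-- Scaling: `∫ kf (a²) = a * ∫ kf 1` for `a > 0`. -/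
lemma kf_integral_scale {a : ℝ} (ha : 0 < a) :
    ∫ t in Ioi (0:ℝ), kf (a ^ 2) t = a * ∫ t in Ioi (0:ℝ), kf 1 t := by
  have ha2 : (0:ℝ) < a ^ 2 := by positivity
  have h := MeasureTheory.integral_comp_mul_left_Ioi (fun u => a * kf 1 u) 0 ha2
  simp only [mul_zero, smul_eq_mul] at h
  have key : ∀ x ∈ Ioi (0:ℝ), a * kf 1 (a ^ 2 * x) = (a ^ 2)⁻¹ * kf (a ^ 2) x := by
    intro x hx
    have hx0 : (0:ℝ) < x := hx
    unfold kf
    have hsplit : (a ^ 2 * x) ^ (-(3/2) : ℝ) = (a ^ 2) ^ (-(3/2) : ℝ) * x ^ (-(3/2) : ℝ) :=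
      Real.mul_rpow (by positivity) hx0.le
    have hpow : (a ^ 2) ^ (-(3/2) : ℝ) = a ^ (-3 : ℝ) := by
      rw [← Real.rpow_natCast a 2, ← Real.rpow_mul ha.le]
      norm_num
    have hexp3 : a * a ^ (-3 : ℝ) = (a ^ 2)⁻¹ := by
      have h1 : a * a ^ (-3 : ℝ) = a ^ (-2 : ℝ) := by
        nth_rewrite 1 [← Real.rpow_one a]
        rw [← Real.rpow_add ha]; norm_num
      rw [h1, show (-2:ℝ) = -((2:ℕ):ℝ) by norm_num, Real.rpow_neg ha.le, Real.rpow_natCast]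
    rw [one_mul, hsplit, hpow]
    calc a * ((1 - Real.exp (-(a ^ 2 * x))) * (a ^ (-3:ℝ) * x ^ (-(3/2):ℝ)))
        = (a * a ^ (-3:ℝ)) * ((1 - Real.exp (-(a ^ 2 * x))) * x ^ (-(3/2):ℝ)) := by ring
      _ = (a ^ 2)⁻¹ * ((1 - Real.exp (-(a ^ 2 * x))) * x ^ (-(3/2):ℝ)) := by rw [hexp3]
  rw [setIntegral_congr_fun measurableSet_Ioi key] at h
  rw [MeasureTheory.integral_const_mul] at h
  have h2 : ∫ x in Ioi (0:ℝ), a * kf 1 x = a * ∫ x in Ioi (0:ℝ), kf 1 x := MeasureTheory.integral_const_mul a _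
  rw [h2] at h
  have := mul_left_cancel₀ (show ((a:ℝ) ^ 2)⁻¹ ≠ 0 by positivity) h
  exact this

/-- The base integral is positive. -/
lemma kf_one_integral_pos : 0 < ∫ t in Ioi (0:ℝ), kf 1 t := by
  set ε : ℝ := (1 - Real.exp (-1)) * 2 ^ (-(3/2) : ℝ) with hε
  have hεpos : 0 < ε := by
    apply mul_pos
    · have : Real.exp (-1) < 1 := by
        rw [Real.exp_lt_one_iff]; norm_num
      linarith
    · positivity
  have hsub : Ioc (1:ℝ) 2 ⊆ Ioi 0 := fun x hx => lt_trans one_pos hx.1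
  have hlow : ∀ t ∈ Ioc (1:ℝ) 2, ε ≤ kf 1 t := by
    intro t ht
    have ht1 : (1:ℝ) ≤ t := ht.1.le
    have ht0 : (0:ℝ) < t := lt_of_lt_of_le one_pos ht1
    unfold kf
    have h1 : 1 - Real.exp (-1) ≤ 1 - Real.exp (-(1 * t)) := by
      have : Real.exp (-(1 * t)) ≤ Real.exp (-1) := by
        apply Real.exp_le_exp.2; linarith
      linarith
    have h2 : (2:ℝ) ^ (-(3/2) : ℝ) ≤ t ^ (-(3/2) : ℝ) :=
      Real.rpow_le_rpow_of_nonpos ht0 ht.2 (by norm_num)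
    calc ε ≤ (1 - Real.exp (-(1 * t))) * (2 ^ (-(3/2) : ℝ)) := by
          apply mul_le_mul_of_nonneg_right h1 (by positivity)
      _ ≤ (1 - Real.exp (-(1 * t))) * t ^ (-(3/2) : ℝ) := by
          apply mul_le_mul_of_nonneg_left h2
          have : Real.exp (-(1 * t)) ≤ 1 := by
            rw [Real.exp_le_one_iff]; linarith
          linarith
  have hint : IntegrableOn (kf 1) (Ioc (1:ℝ) 2) :=
    (kf_integrableOn zero_le_one).mono_set hsub
  have step1 : ε ≤ ∫ t in Ioc (1:ℝ) 2, kf 1 t := by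
    have hconst : ∫ _t in Ioc (1:ℝ) 2, ε = ε := by
      rw [setIntegral_const]
      rw [Real.volume_real_Ioc]
      norm_num
    rw [← hconst]
    exact setIntegral_mono_on (integrableOn_const (hs := measure_Ioc_lt_top.ne)) hint
      measurableSet_Ioc hlow
  have step2 : ∫ t in Ioc (1:ℝ) 2, kf 1 t ≤ ∫ t in Ioi (0:ℝ), kf 1 t := by
    apply setIntegral_mono_set (kf_integrableOn zero_le_one)
    · exact (ae_restrict_iff' measurableSet_Ioi).2 (ae_of_all _ fun t ht => kf_nonneg zero_le_one ht)
    · exact HasSubset.Subset.eventuallyLE hsub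
  linarith

/-- Strict conditional negative definiteness of Euclidean distance. -/
lemma strict_cnd {n : ℕ} (y : ι → EuclideanSpace ℝ (Fin n)) (hy : Function.Injective y)
    (c : ι → ℝ) (hc : c ≠ 0) (h0 : ∑ i, c i = 0) :
    ∑ i, ∑ j, c i * c j * dist (y i) (y j) < 0 := by
  classical
  set K := ∫ t in Ioi (0:ℝ), kf 1 t with hK
  have hKpos := kf_one_integral_pos
  set g : ℝ → ℝ := fun t => ∑ i, ∑ j, c i * c j * Real.exp (-(dist (y i) (y j) ^ 2 * t))
    with hg
  set H : ℝ → ℝ := fun t => ∑ i, ∑ j, c i * c j * kf (dist (y i) (y j) ^ 2) t with hH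
  -- integral representation of each distance
  have hrep : ∀ i j, dist (y i) (y j) * K = ∫ t in Ioi (0:ℝ), kf (dist (y i) (y j) ^ 2) t := by
    intro i j
    by_cases hij : dist (y i) (y j) = 0
    · simp [hij, kf]
    · have hd : 0 < dist (y i) (y j) := lt_of_le_of_ne dist_nonneg (Ne.symm hij)
      rw [kf_integral_scale hd, hK]
  -- integrability of H
  have Hint : IntegrableOn H (Ioi (0:ℝ)) := by
    apply integrable_finset_sum
    intro i _
    apply integrable_finset_sum
    intro j _
    exact ((kf_integrableOn (sq_nonneg _)).const_mul _)
  -- the sum-integral exchange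
  have hsum : (∑ i, ∑ j, c i * c j * dist (y i) (y j)) * K = ∫ t in Ioi (0:ℝ), H t := by
    rw [hH]
    rw [integral_finset_sum _ (fun i _ => integrable_finset_sum _
      (fun j _ => ((kf_integrableOn (sq_nonneg _)).const_mul _)))]
    rw [Finset.sum_mul]
    refine Finset.sum_congr rfl fun i _ => ?_
    rw [integral_finset_sum _ (fun j _ => ((kf_integrableOn (sq_nonneg _)).const_mul _)),
      Finset.sum_mul]
    refine Finset.sum_congr rfl fun j _ => ?_
    rw [mul_assoc, hrep i j, ← MeasureTheory.integral_const_mul]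
  -- pointwise identity
  have hpt : ∀ t : ℝ, H t = -(g t * t ^ (-(3/2) : ℝ)) := by
    intro t
    rw [hH, hg]
    simp only [kf]
    have expand : ∀ i j : ι,
        c i * c j * ((1 - Real.exp (-(dist (y i) (y j) ^ 2 * t))) * t ^ (-(3/2):ℝ))
        = c i * c j * t ^ (-(3/2):ℝ)
          - c i * c j * Real.exp (-(dist (y i) (y j) ^ 2 * t)) * t ^ (-(3/2):ℝ) :=
      fun i j => by ring
    simp_rw [expand, Finset.sum_sub_distrib]
    have hzero : ∑ i, ∑ j, c i * c j * t ^ (-(3/2):ℝ) = 0 := by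
      have : ∑ i, ∑ j, c i * c j * t ^ (-(3/2):ℝ)
          = (∑ i, c i) * (∑ j, c j * t ^ (-(3/2):ℝ)) := by
        rw [Finset.sum_mul_sum]
        exact Finset.sum_congr rfl fun i _ => Finset.sum_congr rfl fun j _ => by ring
      rw [this, h0, zero_mul]
    rw [hzero, zero_sub]
    congr 1
    rw [Finset.sum_mul]
    exact Finset.sum_congr rfl fun i _ => by rw [Finset.sum_mul]
  -- g tends to ∑ cᵢ² at infinity
  set s : ℝ := ∑ i, c i ^ 2 with hs
  have hspos : 0 < s := by
    obtain ⟨i₀, hi₀⟩ := Function.ne_iff.1 hc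
    refine Finset.sum_pos' (fun i _ => sq_nonneg _) ⟨i₀, Finset.mem_univ _, ?_⟩
    exact lt_of_le_of_ne (sq_nonneg _) (Ne.symm (pow_ne_zero 2 hi₀))
  have hgt : Tendsto g atTop (nhds s) := by
    have : Tendsto g atTop (nhds (∑ i, ∑ j, if j = i then c i * c j else 0)) := by
      apply tendsto_finset_sum
      intro i _
      apply tendsto_finset_sum
      intro j _
      by_cases hij : j = i
      · subst hij
        have : (fun t => c j * c j * Real.exp (-(dist (y j) (y j) ^ 2 * t)))
            = fun _ => c j * c j := by
          funext t; simp [dist_self]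
        rw [this]
        rw [if_pos rfl]
        exact tendsto_const_nhds
      · have hd : 0 < dist (y i) (y j) := dist_pos.2 fun h => hij (hy h).symm
        have hd2 : 0 < dist (y i) (y j) ^ 2 := by positivity
        have h1 : Tendsto (fun t : ℝ => dist (y i) (y j) ^ 2 * t) atTop atTop :=
          Tendsto.const_mul_atTop hd2 tendsto_id
        have h2 : Tendsto (fun t : ℝ => -(dist (y i) (y j) ^ 2 * t)) atTop atBot :=
          tendsto_neg_atTop_atBot.comp h1
        have h3 : Tendsto (fun t : ℝ => Real.exp (-(dist (y i) (y j) ^ 2 * t))) atTop (nhds 0) :=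
          Real.tendsto_exp_atBot.comp h2
        have h4 := h3.const_mul (c i * c j)
        rw [mul_zero] at h4
        simpa [if_neg hij] using h4
    simpa [Finset.sum_ite_eq, hs, sq] using this
  obtain ⟨T, hT⟩ := (Filter.eventually_atTop).1 (hgt.eventually_const_lt (show s/2 < s by linarith))
  set T' : ℝ := max T 1 with hT'
  have hT'1 : (1:ℝ) ≤ T' := le_max_right _ _
  have hT'0 : (0:ℝ) < T' := lt_of_lt_of_le one_pos hT'1
  set ε : ℝ := s / 2 * (T' + 1) ^ (-(3/2) : ℝ) with hε
  have hεpos : 0 < ε := by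
    apply mul_pos (by linarith)
    apply Real.rpow_pos_of_pos
    linarith
  -- -H is nonneg on Ioi 0
  have hnegnn : ∀ t ∈ Ioi (0:ℝ), 0 ≤ -H t := by
    intro t ht
    rw [hpt t, neg_neg]
    exact mul_nonneg (gaussian_quad_nonneg y c t (le_of_lt ht)) (Real.rpow_nonneg (le_of_lt ht) _)
  -- positivity of ∫ -H
  have key : 0 < ∫ t in Ioi (0:ℝ), -H t := by
    have sub1 : Ioc T' (T' + 1) ⊆ Ioi (0:ℝ) := fun x hx => lt_trans hT'0 hx.1
    have hlow : ∀ t ∈ Ioc T' (T' + 1), ε ≤ -H t := by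
      intro t ht
      have ht0 : (0:ℝ) < t := lt_trans hT'0 ht.1
      rw [hpt t, neg_neg]
      have hg2 : s / 2 ≤ g t := (hT t (le_trans (le_max_left _ _) ht.1.le)).le
      have hr : (T' + 1) ^ (-(3/2) : ℝ) ≤ t ^ (-(3/2) : ℝ) :=
        Real.rpow_le_rpow_of_nonpos ht0 ht.2 (by norm_num)
      calc ε = s / 2 * (T' + 1) ^ (-(3/2) : ℝ) := hε
        _ ≤ g t * t ^ (-(3/2) : ℝ) := by
            apply mul_le_mul hg2 hr (Real.rpow_nonneg (by linarith) _)
            exact le_trans (by linarith) hg2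
    have hnegint : IntegrableOn (fun t => -H t) (Ioi (0:ℝ)) := Hint.neg
    have hintIoc : IntegrableOn (fun t => -H t) (Ioc T' (T' + 1)) :=
      hnegint.mono_set sub1
    have step1 : ε ≤ ∫ t in Ioc T' (T' + 1), -H t := by
      have hconst : ∫ _t in Ioc T' (T' + 1), ε = ε := by
        rw [setIntegral_const, Real.volume_real_Ioc]
        norm_num
      rw [← hconst]
      exact setIntegral_mono_on (integrableOn_const (hs := measure_Ioc_lt_top.ne))
        hintIoc measurableSet_Ioc hlow
    have step2 : ∫ t in Ioc T' (T' + 1), -H t ≤ ∫ t in Ioi (0:ℝ), -H t := by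
      have hnegint : IntegrableOn (fun t => -H t) (Ioi (0:ℝ)) := Hint.neg
      apply setIntegral_mono_set hnegint
      · exact (ae_restrict_iff' measurableSet_Ioi).2 (ae_of_all _ hnegnn)
      · exact HasSubset.Subset.eventuallyLE sub1
    linarith
  rw [integral_neg] at key
  have hSK : (∑ i, ∑ j, c i * c j * dist (y i) (y j)) * K < 0 := by
    rw [hsum]; linarith
  by_contra hcon
  push_neg at hcon
  exact absurd hSK (not_lt.2 (mul_nonneg hcon hKpos.le))

/-- Quadratic form of a matrix as a double sum. -/
lemma quad_eq {m : ℕ} (M : Matrix (Fin m) (Fin m) ℝ) (w : Fin m → ℝ) :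
    dotProduct (star w) (M.mulVec w) = ∑ i, ∑ j, w i * w j * M i j := by
  simp only [dotProduct, Matrix.mulVec, Pi.star_apply, star_trivial, Finset.mul_sum]
  exact Finset.sum_congr rfl fun i _ => Finset.sum_congr rfl fun j _ => by ring

/-- The main quadratic-form positivity. -/
lemma exp_quad_pos {n m : ℕ} (x : Fin m → EuclideanSpace ℝ (Fin n))
    (hx : Function.Injective x) (c : Fin m → ℝ) (hc : c ≠ 0) :
    0 < ∑ i, ∑ j, c i * c j * Real.exp (-dist (x i) (x j)) := by
  classical
  obtain ⟨i₀, hi₀⟩ := Function.ne_iff.1 hc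
  set ψ : Fin m → ℝ := fun i => dist (x i) (x i₀) with hψ
  set b : Fin m → ℝ := fun i => c i * Real.exp (-ψ i) with hb
  set φ : Matrix (Fin m) (Fin m) ℝ :=
    Matrix.of (fun i j => ψ i + ψ j - dist (x i) (x j)) with hφ
  have hφ_apply : ∀ i j, φ i j = ψ i + ψ j - dist (x i) (x j) := fun i j => rfl
  -- pointwise factorization
  have hkey : ∀ i j, c i * c j * Real.exp (-dist (x i) (x j))
      = b i * b j * Real.exp (φ i j) := by
    intro i j
    have hmul : Real.exp (-ψ i) * Real.exp (-ψ j) * Real.exp (φ i j)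
        = Real.exp (-dist (x i) (x j)) := by
      rw [← Real.exp_add, ← Real.exp_add, hφ_apply]
      congr 1
      ring
    simp only [hb]
    calc c i * c j * Real.exp (-dist (x i) (x j))
        = c i * c j * (Real.exp (-ψ i) * Real.exp (-ψ j) * Real.exp (φ i j)) := by rw [hmul]
      _ = c i * Real.exp (-ψ i) * (c j * Real.exp (-ψ j)) * Real.exp (φ i j) := by ring
  -- nonstrict CND
  have cnd : ∀ w : Fin m → ℝ, (∑ i, w i) = 0 →
      ∑ i, ∑ j, w i * w j * dist (x i) (x j) ≤ 0 := by
    intro w hw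
    by_cases hw0 : w = 0
    · subst hw0; simp
    · exact (strict_cnd x hx w hw0 hw).le
  -- identity A
  have idA : ∀ w : Fin m → ℝ, ∑ i, ∑ j, w i * w j * φ i j
      = 2 * (∑ i, w i) * (∑ i, w i * ψ i)
        - ∑ i, ∑ j, w i * w j * dist (x i) (x j) := by
    intro w
    have expand : ∀ i j, w i * w j * φ i j
        = (w i * ψ i) * w j + w i * (w j * ψ j)
          - w i * w j * dist (x i) (x j) := by
      intro i j; rw [hφ_apply]; ring
    simp_rw [expand, Finset.sum_sub_distrib, Finset.sum_add_distrib]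
    rw [← Finset.sum_mul_sum, ← Finset.sum_mul_sum]
    ring
  -- identity B
  have idB : ∀ w : Fin m → ℝ,
      ∑ i, ∑ j, (w i - (∑ k, w k) * (if i = i₀ then (1:ℝ) else 0))
        * (w j - (∑ k, w k) * (if j = i₀ then (1:ℝ) else 0)) * dist (x i) (x j)
      = ∑ i, ∑ j, w i * w j * dist (x i) (x j)
        - 2 * (∑ i, w i) * (∑ i, w i * ψ i) := by
    intro w
    set σ : ℝ := ∑ k, w k with hσ
    have expand : ∀ i j,
        (w i - σ * (if i = i₀ then (1:ℝ) else 0))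
          * (w j - σ * (if j = i₀ then (1:ℝ) else 0)) * dist (x i) (x j)
        = w i * w j * dist (x i) (x j)
          - σ * ((if i = i₀ then (1:ℝ) else 0) * (w j * dist (x i) (x j)))
          - σ * ((if j = i₀ then (1:ℝ) else 0) * (w i * dist (x i) (x j)))
          + σ * σ * ((if i = i₀ then (1:ℝ) else 0)
              * ((if j = i₀ then (1:ℝ) else 0) * dist (x i) (x j))) := by
      intro i j; ring
    simp_rw [expand, Finset.sum_add_distrib, Finset.sum_sub_distrib, ← Finset.mul_sum,
      ite_mul, one_mul, zero_mul, Finset.sum_ite_eq', Finset.mem_univ, if_true]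
    have e1 : ∑ j, w j * dist (x i₀) (x j) = ∑ i, w i * ψ i := by
      refine Finset.sum_congr rfl fun j _ => ?_
      rw [hψ, dist_comm]
    have e2 : ∑ i, w i * dist (x i) (x i₀) = ∑ i, w i * ψ i := by
      refine Finset.sum_congr rfl fun i _ => rfl
    rw [e1, e2, dist_self]
    ring
  -- φ is PSD
  have hφpsd : φ.PosSemidef := by
    refine Matrix.PosSemidef.of_dotProduct_mulVec_nonneg ?_ ?_
    · ext i j
      simp only [Matrix.conjTranspose_apply, star_trivial, hφ_apply, Matrix.of_apply]
      rw [dist_comm]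
      ring
    · intro w
      rw [quad_eq, idA w]
      set w' : Fin m → ℝ := fun i => w i - (∑ k, w k) * (if i = i₀ then (1:ℝ) else 0) with hw'
      have hsum' : ∑ i, w' i = 0 := by
        simp only [hw']
        rw [Finset.sum_sub_distrib, ← Finset.mul_sum]
        simp [Finset.sum_ite_eq', Finset.mem_univ]
      have := cnd w' hsum'
      have hBB := idB w
      simp only [hw'] at this
      linarith [this, hBB]
  -- Gram decomposition
  obtain ⟨B, hB⟩ : ∃ B : Matrix (Fin m) (Fin m) ℝ, φ = star B * B := by
    open MatrixOrder in exact CStarAlgebra.nonneg_iff_eq_star_mul_self.mp hφpsd.nonneg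
  have hGram : ∀ i j, φ i j = ∑ t, B t i * B t j := by
    intro i j
    rw [hB]
    simp [Matrix.mul_apply, Matrix.star_apply]
  -- assemble
  have hQ : ∑ i, ∑ j, c i * c j * Real.exp (-dist (x i) (x j))
      = ∑ i, ∑ j, b i * b j * Real.exp (∑ t, B t i * B t j) := by
    refine Finset.sum_congr rfl fun i _ => Finset.sum_congr rfl fun j _ => ?_
    rw [hkey i j, hGram i j]
  have hbound := gram_exp_bound (fun i t => B t i) b
  have hφquad : ∑ i, ∑ j, b i * b j * (∑ t, B t i * B t j)
      = ∑ i, ∑ j, b i * b j * φ i j := by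
    refine Finset.sum_congr rfl fun i _ => Finset.sum_congr rfl fun j _ => ?_
    rw [hGram i j]
  rw [hQ]
  by_cases hσ : (∑ i, b i) = 0
  · -- strict CND case
    have hb0 : b ≠ 0 := by
      intro h
      apply hi₀
      have := congrFun h i₀
      simp only [hb, Pi.zero_apply] at this
      rcases mul_eq_zero.1 this with h' | h'
      · exact h'
      · exact absurd h' (Real.exp_ne_zero _)
    have hstrict := strict_cnd x hx b hb0 hσ
    have : ∑ i, ∑ j, b i * b j * φ i j
        = - ∑ i, ∑ j, b i * b j * dist (x i) (x j) := by
      rw [idA b, hσ]; ring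
    calc (0:ℝ) < - ∑ i, ∑ j, b i * b j * dist (x i) (x j) := by linarith
      _ = (∑ i, b i) ^ 2 + ∑ i, ∑ j, b i * b j * (∑ t, B t i * B t j) := by
          rw [hφquad, this, hσ]; ring
      _ ≤ ∑ i, ∑ j, b i * b j * Real.exp (∑ t, B t i * B t j) := hbound
  · -- nonzero mean case
    have hψq : 0 ≤ ∑ i, ∑ j, b i * b j * (∑ t, B t i * B t j) := by
      rw [hφquad, ← quad_eq]
      exact hφpsd.dotProduct_mulVec_nonneg b
    have hsq : 0 < (∑ i, b i) ^ 2 := by positivity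
    calc (0:ℝ) < (∑ i, b i) ^ 2 + ∑ i, ∑ j, b i * b j * (∑ t, B t i * B t j) := by linarith
      _ ≤ _ := hbound

end Aux

/-- For a finite set of distinct points in Euclidean space, the similarity matrix
ζ_{ij} = exp(-‖x_i - x_j‖) is symmetric positive definite, hence invertible. -/
theorem similarity_matrix_posDef (n m : ℕ)
    (x : Fin m → EuclideanSpace ℝ (Fin n)) (hx : Function.Injective x)
    (ζ : Matrix (Fin m) (Fin m) ℝ)
    (hζ : ∀ i j, ζ i j = Real.exp (-dist (x i) (x j))) :
    ζ.IsSymm ∧ ζ.PosDef ∧ IsUnit ζ.det := by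
  classical
  have hherm : ζ.IsHermitian := by
    ext i j
    simp only [Matrix.conjTranspose_apply, star_trivial, hζ]
    rw [dist_comm]
  have hsymm : ζ.IsSymm := by
    ext i j
    rw [Matrix.transpose_apply, hζ, hζ, dist_comm]
  have hpd : ζ.PosDef := by
    refine Matrix.PosDef.of_dotProduct_mulVec_pos hherm fun c hc => ?_
    rw [quad_eq]
    have hq := exp_quad_pos x hx c hc
    have : ∑ i, ∑ j, c i * c j * ζ i j
        = ∑ i, ∑ j, c i * c j * Real.exp (-dist (x i) (x j)) := by
      refine Finset.sum_congr rfl fun i _ => Finset.sum_congr rfl fun j _ => ?_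
      rw [hζ]
    rw [this]
    exact hq
  exact ⟨hsymm, hpd, hpd.det_pos.ne'.isUnit⟩
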